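/- arXiv:1805.02785 — 7 statements merged into one kernel-verified Lean document; each statement's English description precedes it below -/
import Mathlib

section
/- For a fully connected deterministic MDP with a single reward source r_g > 0 at state s_g and discount factor 0 < γ < 1, the value at the reward state equals V(s_g) = r_g / (1 − γ^{φ(s_g)}), where φ(s_g) is the minimum cycle length at s_g and V(s_g) is the supremum over all infinite action sequences starting at s_g of the discounted return. -/
/-- The trajectory induced by an infinite action sequence `a` from initial
state `s`: `traj T s a 0 = s` and `traj T s a (t+1) = T (traj T s a t) (a t)`. -/
def traj {S A : Type*} (T : S → A → S) (s : S) (a : ℕ → A) : ℕ → S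
  | 0 => s
  | t + 1 => T (traj T s a t) (a t)

/-!
Write `n = φ(s_g)`. The return of an action sequence from `s_g` is `r_g` times the sum of `γ ^ t`
over the times `t` at which the trajectory is at `s_g`. Two such times are at least `n` apart, since
the actions between them form a cycle at `s_g`; hence the `k`-th visit happens no earlier than time
`n * k` and the return is at most `r_g * ∑ γ ^ (n * k) = r_g / (1 - γ ^ n)`. Repeating a cycle of
length `n` forever visits `s_g` at every multiple of `n` and attains this bound.
-/

open Finset

lemma mul_count_le_of_separated {p : ℕ → Prop} [DecidablePred p] {n : ℕ}
    (hsep : ∀ i j, p i → p j → i < j → i + n ≤ j) {t : ℕ} (ht : p t) :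
    n * Nat.count p t ≤ t := by
  -- the windows `[j, j + n)` for `j < t` with `p j` are disjoint and lie in `[0, t)`
  rw [Nat.count_eq_card_filter_range]
  set F := {x ∈ range t | p x}
  have hdisj : (F : Set ℕ).PairwiseDisjoint fun j => Ico j (j + n) := by
    intro i hi j hj hij
    simp only [coe_filter, mem_range, Set.mem_ofPred_eq, F] at hi hj
    rw [Function.onFun, disjoint_left]
    intro x hxi hxj
    rw [mem_Ico] at hxi hxj
    rcases hij.lt_or_gt with h | h
    · have := hsep i j hi.2 hj.2 h; omega
    · have := hsep j i hj.2 hi.2 h; omega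
  have hsub : F.biUnion (fun j => Ico j (j + n)) ⊆ range t := by
    intro x hx
    obtain ⟨j, hj, hx⟩ := mem_biUnion.1 hx
    rw [mem_filter, mem_range] at hj
    have := hsep j t hj.2 ht hj.1
    rw [mem_Ico] at hx
    rw [mem_range]; omega
  calc n * #F = ∑ j ∈ F, #(Ico j (j + n)) := by simp [mul_comm]
    _ = #(F.biUnion fun j => Ico j (j + n)) := (card_biUnion hdisj).symm
    _ ≤ #(range t) := card_le_card hsub
    _ = t := card_range t

lemma hasSum_geometric_pow_mul {γ : ℝ} (hγ0 : 0 ≤ γ) (hγ1 : γ < 1) {n : ℕ} (hn : 0 < n) :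
    HasSum (fun k : ℕ => γ ^ (n * k)) (1 - γ ^ n)⁻¹ := by
  simp_rw [pow_mul]
  exact hasSum_geometric_of_lt_one (pow_nonneg hγ0 n) (pow_lt_one₀ hγ0 hγ1 hn.ne')

lemma tsum_pow_le_of_separated {γ : ℝ} (hγ0 : 0 ≤ γ) (hγ1 : γ < 1) {n : ℕ} (hn : 0 < n)
    {P : Set ℕ} (hsep : ∀ i ∈ P, ∀ j ∈ P, i < j → i + n ≤ j) :
    ∑' t : P, γ ^ (t : ℕ) ≤ (1 - γ ^ n)⁻¹ := by
  classical
  have hgeom := hasSum_geometric_pow_mul hγ0 hγ1 hn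
  rw [← hgeom.tsum_eq]
  refine Summable.tsum_le_tsum_of_inj (fun t : P => Nat.count (· ∈ P) t)
    (fun t t' h => Subtype.ext (Nat.count_injective t.2 t'.2 h))
    (fun k _ => pow_nonneg hγ0 _) (fun t => ?_)
    ((summable_geometric_of_lt_one hγ0 hγ1).subtype P)
    hgeom.summable
  exact pow_le_pow_of_le_one hγ0 hγ1.le
    (mul_count_le_of_separated (fun i j hi hj => hsep i hi j hj) t.2)

lemma inv_one_sub_pow_le_tsum_pow {γ : ℝ} (hγ0 : 0 ≤ γ) (hγ1 : γ < 1) {n : ℕ} (hn : 0 < n)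
    {P : Set ℕ} (hP : ∀ k, n * k ∈ P) :
    (1 - γ ^ n)⁻¹ ≤ ∑' t : P, γ ^ (t : ℕ) := by
  have hgeom := hasSum_geometric_pow_mul hγ0 hγ1 hn
  rw [← hgeom.tsum_eq]
  exact Summable.tsum_le_tsum_of_inj (fun k => (⟨n * k, hP k⟩ : P))
    (fun k k' h => Nat.eq_of_mul_eq_mul_left hn (congrArg Subtype.val h))
    (fun t _ => pow_nonneg hγ0 _) (fun k => le_rfl)
    hgeom.summable
    ((summable_geometric_of_lt_one hγ0 hγ1).subtype P)

section MDP

variable {S A : Type*} (T : S → A → S)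

def cycleLengths (s : S) : Set ℕ :=
  {t | 1 ≤ t ∧ ∃ l : List A, l.length = t ∧ l.foldl T s = s}

lemma cycleLengths_nonempty [Nonempty A] (hconn : ∀ s s' : S, ∃ l : List A, l.foldl T s = s')
    (s : S) : (cycleLengths T s).Nonempty := by
  obtain ⟨a⟩ := ‹Nonempty A›
  obtain ⟨l, hl⟩ := hconn (T s a) s
  exact ⟨l.length + 1, by omega, a :: l, rfl, hl⟩

lemma traj_add (s : S) (a : ℕ → A) (t m : ℕ) :
    traj T s a (t + m) = (List.ofFn fun i : Fin m => a (t + i)).foldl T (traj T s a t) := by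
  induction m with
  | zero => rfl
  | succ m ih =>
    rw [List.ofFn_succ_last, List.foldl_append]
    simp only [Fin.val_castSucc, Fin.val_last, ← ih]
    rfl

lemma sub_mem_cycleLengths_of_traj_eq {s s₀ : S} {a : ℕ → A} {i j : ℕ}
    (hi : traj T s a i = s₀) (hj : traj T s a j = s₀) (hij : i < j) :
    j - i ∈ cycleLengths T s₀ := by
  refine ⟨by omega, List.ofFn fun k : Fin (j - i) => a (i + k), List.length_ofFn, ?_⟩
  rw [← hi, ← traj_add, Nat.add_sub_cancel' hij.le, hi, hj]

lemma exists_traj_mul_eq {s : S} {n : ℕ} (hn : n ∈ cycleLengths T s) :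
    ∃ a : ℕ → A, ∀ k, traj T s a (n * k) = s := by
  obtain ⟨hn1, l, rfl, hl⟩ := hn
  refine ⟨fun t => l[t % l.length]'(Nat.mod_lt _ hn1), fun k => ?_⟩
  induction k with
  | zero => rfl
  | succ k ih =>
    rw [Nat.mul_succ, traj_add, ih]
    convert hl using 2
    conv_rhs => rw [← List.ofFn_getElem (xs := l)]
    congr! 3 with i
    rw [Nat.mul_add_mod, Nat.mod_eq_of_lt i.2]

variable {R : S → ℝ} {γ : ℝ} {s₀ : S} {r : ℝ}

lemma tsum_discounted_eq_mul_tsum_visits (hR₀ : R s₀ = r) (hR : ∀ s, s ≠ s₀ → R s = 0)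
    (s : S) (a : ℕ → A) :
    ∑' t : ℕ, γ ^ t * R (traj T s a t) = r * ∑' t : {t | traj T s a t = s₀}, γ ^ (t : ℕ) := by
  rw [_root_.tsum_subtype, ← tsum_mul_left]
  congr 1 with t
  by_cases h : traj T s a t = s₀ <;> simp [h, hR₀, hR, mul_comm]

end MDP

theorem single_source_value_at_goal_general
    {S A : Type*} [Nonempty A]
    (T : S → A → S) (R : S → ℝ) (γ : ℝ) (hγ0 : 0 < γ) (hγ1 : γ < 1)
    (hconn : ∀ s s' : S, ∃ l : List A, l.foldl T s = s')
    (s_g : S) (r_g : ℝ) (hr : 0 < r_g)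
    (hRg : R s_g = r_g) (hR0 : ∀ s : S, s ≠ s_g → R s = 0) :
    (⨆ a : ℕ → A, ∑' t : ℕ, γ ^ t * R (traj T s_g a t))
      = r_g /
        (1 - γ ^ sInf {t : ℕ | 1 ≤ t ∧ ∃ l : List A, l.length = t ∧ l.foldl T s_g = s_g}) := by
  change _ = r_g / (1 - γ ^ sInf (cycleLengths T s_g))
  set n := sInf (cycleLengths T s_g)
  have hn : n ∈ cycleLengths T s_g := Nat.sInf_mem (cycleLengths_nonempty T hconn s_g)
  have hupper (a : ℕ → A) : ∑' t : ℕ, γ ^ t * R (traj T s_g a t) ≤ r_g / (1 - γ ^ n) := by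
    rw [tsum_discounted_eq_mul_tsum_visits T hRg hR0, div_eq_mul_inv]
    refine mul_le_mul_of_nonneg_left (tsum_pow_le_of_separated hγ0.le hγ1 hn.1 ?_) hr.le
    intro i hi j hj hij
    have := Nat.sInf_le (sub_mem_cycleLengths_of_traj_eq T hi hj hij)
    omega
  obtain ⟨a, ha⟩ := exists_traj_mul_eq T hn
  refine le_antisymm (ciSup_le hupper) (le_ciSup_of_le ⟨_, Set.forall_mem_range.2 hupper⟩ a ?_)
  rw [tsum_discounted_eq_mul_tsum_visits T hRg hR0, div_eq_mul_inv]
  exact mul_le_mul_of_nonneg_left (inv_one_sub_pow_le_tsum_pow hγ0.le hγ1 hn.1 ha) hr.le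

/-- For a fully connected deterministic MDP with a single reward source
`r_g > 0` at state `s_g` and discount factor `0 < γ < 1`, the value at the
reward state — the supremum over all infinite action sequences of the
discounted return — equals `r_g / (1 - γ ^ φ(s_g))`, where `φ(s_g)` is the
minimum cycle length at `s_g`. -/
theorem single_source_value_at_goal
    {S A : Type*} [Fintype S] [Nonempty S] [Fintype A] [Nonempty A]
    (T : S → A → S) (R : S → ℝ) (γ : ℝ) (hγ0 : 0 < γ) (hγ1 : γ < 1)
    (hconn : ∀ s s' : S, ∃ l : List A, l.foldl T s = s')
    (s_g : S) (r_g : ℝ) (hr : 0 < r_g)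
    (hRg : R s_g = r_g) (hR0 : ∀ s : S, s ≠ s_g → R s = 0) :
    (⨆ a : ℕ → A, ∑' t : ℕ, γ ^ t * R (traj T s_g a t))
      = r_g /
        (1 - γ ^ sInf {t : ℕ | 1 ≤ t ∧ ∃ l : List A, l.length = t ∧ l.foldl T s_g = s_g}) :=
  single_source_value_at_goal_general T R γ hγ0 hγ1 hconn s_g r_g hr hRg hR0
end

section
/- Value iteration converges to the optimal value function: if V* : S → ℝ is a fixed point of the Bellman operator (LV* = V*), then for any initial function V₀ : S → ℝ, the iterates Vₙ = Lⁿ V₀ converge to V* in the sup-norm, i.e. ‖Lⁿ V₀ − V*‖∞ → 0 as n → ∞. -/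
/-!
The Bellman operator is a `γ`-contraction for the sup-norm: each expected value
`∑ s', P s a s' * V s'` is a convex combination of the values of `V`, so it moves by at most
`‖V - W‖∞` when `V` is replaced by `W`, and taking a maximum over actions preserves this bound.
By the Banach fixed point theorem the iterates `Lⁿ V₀` converge to the unique fixed point,
which is `V*`.
-/

/-- The Bellman operator of a finite MDP with transition probabilities `P`,
reward `R`, and discount factor `γ`:
`(L V)(s) = R s + γ * max_{a} ∑_{s'} P s a s' * V s'`. -/
noncomputable def bellmanOp {S A : Type*} [Fintype S] [Fintype A] [Nonempty A]
    (P : S → A → S → ℝ) (R : S → ℝ) (γ : ℝ) (V : S → ℝ) : S → ℝ :=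
  fun s => R s + γ * Finset.univ.sup' Finset.univ_nonempty
    (fun a : A => ∑ s' : S, P s a s' * V s')

open Finset

section Sup'

variable {ι α : Type*} [AddCommGroup α] [LinearOrder α] [IsOrderedAddMonoid α]
  {s : Finset ι} (hs : s.Nonempty) {f g : ι → α} {M : α}

include hs in
lemma Finset.sup'_sub_sup'_le (h : ∀ i ∈ s, f i - g i ≤ M) : s.sup' hs f - s.sup' hs g ≤ M :=
  sub_le_iff_le_add.2 <| sup'_le _ _ fun i hi =>
    (sub_le_iff_le_add.1 (h i hi)).trans (add_le_add_right (le_sup' g hi) M)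

include hs in
lemma Finset.abs_sup'_sub_sup'_le (h : ∀ i ∈ s, |f i - g i| ≤ M) :
    |s.sup' hs f - s.sup' hs g| ≤ M :=
  abs_sub_le_iff.2 ⟨sup'_sub_sup'_le hs fun i hi => (abs_sub_le_iff.1 (h i hi)).1,
    sup'_sub_sup'_le hs fun i hi => (abs_sub_le_iff.1 (h i hi)).2⟩

end Sup'

lemma Finset.abs_sum_mul_sub_sum_mul_le {ι R : Type*} [CommRing R] [LinearOrder R]
    [IsOrderedRing R] (t : Finset ι) {p v w : ι → R} {M : R}
    (hp0 : ∀ i ∈ t, 0 ≤ p i) (hp1 : ∑ i ∈ t, p i = 1) (h : ∀ i ∈ t, |v i - w i| ≤ M) :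
    |∑ i ∈ t, p i * v i - ∑ i ∈ t, p i * w i| ≤ M :=
  calc |∑ i ∈ t, p i * v i - ∑ i ∈ t, p i * w i|
      = |∑ i ∈ t, p i * (v i - w i)| := by simp only [mul_sub, sum_sub_distrib]
    _ ≤ ∑ i ∈ t, p i * |v i - w i| := by
        refine (abs_sum_le_sum_abs _ _).trans (sum_le_sum fun i hi => ?_)
        rw [abs_mul, abs_of_nonneg (hp0 i hi)]
    _ ≤ ∑ i ∈ t, p i * M := sum_le_sum fun i hi => mul_le_mul_of_nonneg_left (h i hi) (hp0 i hi)
    _ = M := by rw [← sum_mul, hp1, one_mul]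

lemma Finset.sup'_univ_abs_sub_eq_dist {ι : Type*} [Fintype ι] [Nonempty ι] (f g : ι → ℝ) :
    univ.sup' univ_nonempty (fun i => |f i - g i|) = dist f g := by
  refine le_antisymm (sup'_le _ _ fun i _ => ?_) ((dist_pi_le_iff
    (le_sup'_of_le _ (mem_univ (Classical.arbitrary ι)) (abs_nonneg _))).2 fun i => ?_)
  · exact (Real.dist_eq (f i) (g i)).symm.le.trans (dist_le_pi_dist f g i)
  · exact (Real.dist_eq (f i) (g i)).le.trans (le_sup' (fun i => |f i - g i|) (mem_univ i))

section Bellman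

variable {S A : Type*} [Fintype S] [Fintype A] [Nonempty A]
  (P : S → A → S → ℝ) (R : S → ℝ) {γ : ℝ}

lemma dist_bellmanOp_le (hγ : 0 ≤ γ) (hP0 : ∀ s a s', 0 ≤ P s a s')
    (hP1 : ∀ s a, ∑ s' : S, P s a s' = 1) (V W : S → ℝ) :
    dist (bellmanOp P R γ V) (bellmanOp P R γ W) ≤ γ * dist V W := by
  refine (dist_pi_le_iff (by positivity)).2 fun s => ?_
  rw [Real.dist_eq, bellmanOp, bellmanOp, add_sub_add_left_eq_sub, ← mul_sub, abs_mul,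
    abs_of_nonneg hγ]
  refine mul_le_mul_of_nonneg_left (abs_sup'_sub_sup'_le _ fun a _ => ?_) hγ
  refine abs_sum_mul_sub_sum_mul_le _ (fun s' _ => hP0 s a s') (hP1 s a) fun s' _ => ?_
  exact (Real.dist_eq (V s') (W s')).symm.le.trans (dist_le_pi_dist V W s')

lemma contractingWith_bellmanOp (hγ0 : 0 ≤ γ) (hγ1 : γ < 1) (hP0 : ∀ s a s', 0 ≤ P s a s')
    (hP1 : ∀ s a, ∑ s' : S, P s a s' = 1) :
    ContractingWith ⟨γ, hγ0⟩ (bellmanOp P R γ) :=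
  ⟨hγ1, LipschitzWith.of_dist_le_mul (dist_bellmanOp_le P R hγ0 hP0 hP1)⟩

end Bellman

/-- Value iteration converges to the optimal value function: if `V*` is a
fixed point of the Bellman operator, then for any initial `V₀` the iterates
`Vₙ = Lⁿ V₀` converge to `V*` in the sup-norm `‖V‖∞ = max_s |V s|`. -/
theorem value_iteration_converges
    {S A : Type*} [Fintype S] [Nonempty S] [Fintype A] [Nonempty A]
    (P : S → A → S → ℝ) (R : S → ℝ) (γ : ℝ) (hγ0 : 0 < γ) (hγ1 : γ < 1)
    (hP0 : ∀ s a s', 0 ≤ P s a s') (hP1 : ∀ s a, ∑ s' : S, P s a s' = 1)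
    (Vstar : S → ℝ) (hfix : bellmanOp P R γ Vstar = Vstar) (V₀ : S → ℝ) :
    Filter.Tendsto
      (fun n : ℕ => Finset.univ.sup' Finset.univ_nonempty
        (fun s : S => |(bellmanOp P R γ)^[n] V₀ s - Vstar s|))
      Filter.atTop (nhds 0) := by
  have hL := contractingWith_bellmanOp P R hγ0.le hγ1 hP0 hP1
  have hconv := hL.tendsto_iterate_fixedPoint V₀
  rw [← hL.fixedPoint_unique hfix] at hconv
  simpa only [sup'_univ_abs_sub_eq_dist] using tendsto_iff_dist_tendsto_zero.1 hconv
end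

section
/- The optimal value function dominates every stationary policy's value function: if V* : S → ℝ satisfies LV* = V*, then for every stationary policy π : S → A and every state s ∈ S, V*(s) ≥ V^π(s), where V^π is the unique fixed point of the policy operator L^π. -/
/-- The policy operator of a stationary policy `π : S → A`:
`(L^π V)(s) = R s + γ * ∑_{s'} P s (π s) s' * V s'`. -/
noncomputable def policyOp {S A : Type*} [Fintype S]
    (P : S → A → S → ℝ) (R : S → ℝ) (γ : ℝ) (π : S → A) (V : S → ℝ) : S → ℝ :=
  fun s => R s + γ * ∑ s' : S, P s (π s) s' * V s'

open Finset

section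

variable {S A : Type*} [Fintype S]

theorem policyOp_le_bellmanOp [Fintype A] [Nonempty A] (P : S → A → S → ℝ) (R : S → ℝ) {γ : ℝ}
    (hγ : 0 ≤ γ) (π : S → A) (V : S → ℝ) (s : S) :
    policyOp P R γ π V s ≤ bellmanOp P R γ V s := by
  unfold policyOp bellmanOp
  gcongr
  exact le_sup' (fun a : A => ∑ s' : S, P s a s' * V s') (mem_univ (π s))

theorem policyOp_sub_policyOp (P : S → A → S → ℝ) (R : S → ℝ) (γ : ℝ) (π : S → A)
    (U V : S → ℝ) (s : S) :
    policyOp P R γ π U s - policyOp P R γ π V s = γ * ∑ s', P s (π s) s' * (U s' - V s') := by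
  simp only [policyOp, mul_sub, sum_sub_distrib]
  ring

theorem sum_mul_le_of_forall_le {w f : S → ℝ} {M : ℝ} (hw0 : ∀ i, 0 ≤ w i) (hw1 : ∑ i, w i = 1)
    (hf : ∀ i, f i ≤ M) : ∑ i, w i * f i ≤ M :=
  calc ∑ i, w i * f i ≤ ∑ i, w i * M :=
        sum_le_sum fun i _ => mul_le_mul_of_nonneg_left (hf i) (hw0 i)
    _ = M := by rw [← sum_mul, hw1, one_mul]

theorem le_of_policyOp_le (P : S → A → S → ℝ) (R : S → ℝ) {γ : ℝ} (hγ0 : 0 ≤ γ) (hγ1 : γ < 1)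
    (hP0 : ∀ s a s', 0 ≤ P s a s') (hP1 : ∀ s a, ∑ s' : S, P s a s' = 1) (π : S → A)
    {V Vpi : S → ℝ} (hV : ∀ s, policyOp P R γ π V s ≤ V s)
    (hpifix : policyOp P R γ π Vpi = Vpi) (s : S) : Vpi s ≤ V s := by
  set d : S → ℝ := fun s => Vpi s - V s
  obtain ⟨s₀, -, hs₀⟩ := exists_max_image univ d ⟨s, mem_univ s⟩
  have hd : ∀ t, d t ≤ γ * d s₀ := fun t =>
    calc d t ≤ policyOp P R γ π Vpi t - policyOp P R γ π V t := by
          linarith [hV t, congrFun hpifix t]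
      _ = γ * ∑ s', P t (π t) s' * d s' := policyOp_sub_policyOp P R γ π Vpi V t
      _ ≤ γ * d s₀ := by
          gcongr
          exact sum_mul_le_of_forall_le (hP0 t (π t)) (hP1 t (π t)) fun i => hs₀ i (mem_univ i)
  have hd₀ : d s₀ ≤ 0 := by nlinarith [hd s₀]
  exact sub_nonpos.mp ((hs₀ s (mem_univ s)).trans hd₀)

end

theorem optimal_value_dominates_policy_value_general
    {S A : Type*} [Fintype S] [Fintype A] [Nonempty A]
    (P : S → A → S → ℝ) (R : S → ℝ) (γ : ℝ) (hγ0 : 0 < γ) (hγ1 : γ < 1)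
    (hP0 : ∀ s a s', 0 ≤ P s a s') (hP1 : ∀ s a, ∑ s' : S, P s a s' = 1)
    (Vstar : S → ℝ) (hfix : bellmanOp P R γ Vstar = Vstar)
    (π : S → A) (Vpi : S → ℝ) (hpifix : policyOp P R γ π Vpi = Vpi) :
    ∀ s : S, Vpi s ≤ Vstar s :=
  le_of_policyOp_le P R hγ0.le hγ1 hP0 hP1 π
    (fun s => (policyOp_le_bellmanOp P R hγ0.le π Vstar s).trans_eq (congrFun hfix s)) hpifix

/-- The optimal value function dominates every stationary policy's value
function: if `L V* = V*` and `V^π` is the (unique) fixed point of the policy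
operator `L^π`, then `V*(s) ≥ V^π(s)` for every state `s`. -/
theorem optimal_value_dominates_policy_value
    {S A : Type*} [Fintype S] [Nonempty S] [Fintype A] [Nonempty A]
    (P : S → A → S → ℝ) (R : S → ℝ) (γ : ℝ) (hγ0 : 0 < γ) (hγ1 : γ < 1)
    (hP0 : ∀ s a s', 0 ≤ P s a s') (hP1 : ∀ s a, ∑ s' : S, P s a s' = 1)
    (Vstar : S → ℝ) (hfix : bellmanOp P R γ Vstar = Vstar)
    (π : S → A) (Vpi : S → ℝ) (hpifix : policyOp P R γ π Vpi = Vpi) :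
    ∀ s : S, Vpi s ≤ Vstar s :=
  optimal_value_dominates_policy_value_general P R γ hγ0 hγ1 hP0 hP1 Vstar hfix π Vpi hpifix
end

section
/- The maximum of the optimal value function cannot occur at a state with zero reward: suppose V* : S → ℝ satisfies LV* = V*, R(s) ≥ 0 for all s ∈ S, and R(s₀) > 0 for some s₀ ∈ S. Then every state s_m at which V* attains its maximum over S satisfies R(s_m) > 0; equivalently, for every s_z ∈ S with R(s_z) = 0 one has V*(s_z) < max_{s∈S} V*(s). -/
/-!
Let `M` be the maximum of `V*`. At a maximizer `s_m` every action averages `V*` to at most `M`,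
so the fixed-point equation gives `(1 - γ) M ≤ R s_m`. On the other hand the same equation at a
minimizer shows `V* ≥ 0`, hence `V* ≥ R` and `M ≥ R s₀ > 0`; so `R s_m ≥ (1 - γ) R s₀ > 0`.
-/

section WeightedSum

variable {ι : Type*} [Fintype ι] {p f : ι → ℝ} {c : ℝ}

theorem sum_mul_le_of_forall_le_s11 (hp0 : ∀ i, 0 ≤ p i) (hp1 : ∑ i, p i = 1)
    (hf : ∀ i, f i ≤ c) : ∑ i, p i * f i ≤ c :=
  calc ∑ i, p i * f i ≤ ∑ i, p i * c :=
        Finset.sum_le_sum fun i _ => mul_le_mul_of_nonneg_left (hf i) (hp0 i)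
    _ = c := by rw [← Finset.sum_mul, hp1, one_mul]

theorem le_sum_mul_of_forall_le (hp0 : ∀ i, 0 ≤ p i) (hp1 : ∑ i, p i = 1)
    (hf : ∀ i, c ≤ f i) : c ≤ ∑ i, p i * f i :=
  calc c = ∑ i, p i * c := by rw [← Finset.sum_mul, hp1, one_mul]
    _ ≤ ∑ i, p i * f i :=
        Finset.sum_le_sum fun i _ => mul_le_mul_of_nonneg_left (hf i) (hp0 i)

end WeightedSum

section Bellman

variable {S A : Type*} [Fintype S] [Fintype A] [Nonempty A]
  {P : S → A → S → ℝ} {R : S → ℝ} {γ : ℝ} {V : S → ℝ} {c : ℝ}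

theorem bellmanOp_le_of_forall_le (hγ : 0 ≤ γ) (hP0 : ∀ s a s', 0 ≤ P s a s')
    (hP1 : ∀ s a, ∑ s' : S, P s a s' = 1) (hV : ∀ s, V s ≤ c) (s : S) :
    bellmanOp P R γ V s ≤ R s + γ * c := by
  have hsup : Finset.univ.sup' Finset.univ_nonempty
      (fun a : A => ∑ s' : S, P s a s' * V s') ≤ c :=
    Finset.sup'_le _ _ fun a _ => sum_mul_le_of_forall_le_s11 (hP0 s a) (hP1 s a) hV
  unfold bellmanOp
  gcongr

theorem le_bellmanOp_of_forall_le (hγ : 0 ≤ γ) (hP0 : ∀ s a s', 0 ≤ P s a s')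
    (hP1 : ∀ s a, ∑ s' : S, P s a s' = 1) (hV : ∀ s, c ≤ V s) (s : S) :
    R s + γ * c ≤ bellmanOp P R γ V s := by
  obtain ⟨a⟩ := ‹Nonempty A›
  have hsup : c ≤ Finset.univ.sup' Finset.univ_nonempty
      (fun a : A => ∑ s' : S, P s a s' * V s') :=
    (le_sum_mul_of_forall_le (hP0 s a) (hP1 s a) hV).trans
      (Finset.le_sup' (fun a : A => ∑ s' : S, P s a s' * V s') (Finset.mem_univ a))
  unfold bellmanOp
  gcongr

theorem nonneg_of_bellmanOp_eq_self (hγ0 : 0 ≤ γ) (hγ1 : γ < 1)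
    (hP0 : ∀ s a s', 0 ≤ P s a s') (hP1 : ∀ s a, ∑ s' : S, P s a s' = 1)
    (hfix : bellmanOp P R γ V = V) (hR : ∀ s, 0 ≤ R s) (s : S) : 0 ≤ V s := by
  have : Nonempty S := ⟨s⟩
  obtain ⟨s_min, hs_min⟩ := Finite.exists_min V
  have h := le_bellmanOp_of_forall_le (R := R) hγ0 hP0 hP1 hs_min s_min
  rw [hfix] at h
  have hmin : 0 ≤ (1 - γ) * V s_min := by linarith [hR s_min]
  exact (nonneg_of_mul_nonneg_right hmin (sub_pos.mpr hγ1)).trans (hs_min s)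

theorem mul_le_reward_of_bellmanOp_eq_self (hγ0 : 0 ≤ γ) (hP0 : ∀ s a s', 0 ≤ P s a s')
    (hP1 : ∀ s a, ∑ s' : S, P s a s' = 1) (hfix : bellmanOp P R γ V = V) {s_m : S}
    (hmax : ∀ s, V s ≤ V s_m) :
    (1 - γ) * V s_m ≤ R s_m := by
  have h := bellmanOp_le_of_forall_le (R := R) hγ0 hP0 hP1 hmax s_m
  rw [hfix] at h
  linarith

theorem reward_le_of_bellmanOp_eq_self (hγ0 : 0 ≤ γ) (hγ1 : γ < 1)
    (hP0 : ∀ s a s', 0 ≤ P s a s') (hP1 : ∀ s a, ∑ s' : S, P s a s' = 1)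
    (hfix : bellmanOp P R γ V = V) (hR : ∀ s, 0 ≤ R s) (s : S) : R s ≤ V s := by
  simpa only [hfix, mul_zero, add_zero] using le_bellmanOp_of_forall_le (R := R) hγ0 hP0 hP1
    (nonneg_of_bellmanOp_eq_self hγ0 hγ1 hP0 hP1 hfix hR) s

end Bellman

/-- The maximum of the optimal value function cannot occur at a state with
zero reward: if `L V* = V*`, `R ≥ 0`, and `R s₀ > 0` for some `s₀`, then
every state at which `V*` attains its maximum has positive reward;
equivalently, every zero-reward state has `V*` strictly below the maximum. -/
theorem max_of_value_not_at_zero_reward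
    {S A : Type*} [Fintype S] [Nonempty S] [Fintype A] [Nonempty A]
    (P : S → A → S → ℝ) (R : S → ℝ) (γ : ℝ) (hγ0 : 0 < γ) (hγ1 : γ < 1)
    (hP0 : ∀ s a s', 0 ≤ P s a s') (hP1 : ∀ s a, ∑ s' : S, P s a s' = 1)
    (Vstar : S → ℝ) (hfix : bellmanOp P R γ Vstar = Vstar)
    (hR : ∀ s, 0 ≤ R s) (s₀ : S) (hs₀ : 0 < R s₀) :
    (∀ s_m : S, (∀ s : S, Vstar s ≤ Vstar s_m) → 0 < R s_m) ∧
      (∀ s_z : S, R s_z = 0 →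
        Vstar s_z < Finset.univ.sup' Finset.univ_nonempty Vstar) := by
  have hpos : ∀ s_m : S, (∀ s : S, Vstar s ≤ Vstar s_m) → 0 < R s_m := fun s_m hmax =>
    calc 0 < (1 - γ) * R s₀ := mul_pos (sub_pos.mpr hγ1) hs₀
      _ ≤ (1 - γ) * Vstar s_m := mul_le_mul_of_nonneg_left
        ((reward_le_of_bellmanOp_eq_self hγ0.le hγ1 hP0 hP1 hfix hR s₀).trans (hmax s₀))
        (sub_nonneg.mpr hγ1.le)
      _ ≤ R s_m := mul_le_reward_of_bellmanOp_eq_self hγ0.le hP0 hP1 hfix hmax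
  refine ⟨hpos, fun s_z hRz => lt_of_not_ge fun hge => ?_⟩
  have hmax : ∀ s, Vstar s ≤ Vstar s_z := fun s =>
    (Finset.le_sup' Vstar (Finset.mem_univ s)).trans hge
  exact (hpos s_z hmax).ne' hRz
end

section
/- In a deterministic MDP, the value of every zero-reward state is determined by a positive-reward state: suppose V : S → ℝ satisfies the deterministic Bellman optimality equation V(s) = R(s) + γ · max_{a∈A} V(T(s,a)) for all s, that R(s) ≥ 0 for all s, and that s ∈ S satisfies R(s) = 0 and V(s) > 0. Then there exist n ≥ 1, actions a₀,…,a_{n−1} ∈ A and the trajectory s⁽⁰⁾ = s, s⁽ᵏ⁺¹⁾ = T(s⁽ᵏ⁾, a_k), such that R(s⁽ᵏ⁾) = 0 for all 0 ≤ k < n, R(s⁽ⁿ⁾) > 0, and V(s) = γⁿ · V(s⁽ⁿ⁾). -/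
open Filter Topology

section Recurrence

variable {γ : ℝ} {v r : ℕ → ℝ}

theorem eq_pow_mul_of_recurrence (hstep : ∀ k, v k = r k + γ * v (k + 1)) :
    ∀ n, (∀ k < n, r k = 0) → v 0 = γ ^ n * v n
  | 0, _ => by simp
  | n + 1, hr => by
    rw [eq_pow_mul_of_recurrence hstep n fun k hk => hr k (hk.trans n.lt_succ_self),
      hstep n, hr n n.lt_succ_self, pow_succ]
    ring

theorem nonpos_of_eq_pow_mul_of_bddAbove (hγ0 : 0 ≤ γ) (hγ1 : γ < 1) {x : ℝ}
    (hv : BddAbove (Set.range v)) (h : ∀ n, x = γ ^ n * v n) : x ≤ 0 := by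
  obtain ⟨M, hM⟩ := hv
  have hlim : Tendsto (fun n => γ ^ n * M) atTop (𝓝 0) := by
    simpa using (tendsto_pow_atTop_nhds_zero_of_lt_one hγ0 hγ1).mul_const M
  refine ge_of_tendsto' hlim fun n => ?_
  rw [h n]
  exact mul_le_mul_of_nonneg_left (hM ⟨n, rfl⟩) (pow_nonneg hγ0 n)

theorem exists_first_pos_of_recurrence (hγ0 : 0 ≤ γ) (hγ1 : γ < 1)
    (hv : BddAbove (Set.range v)) (hstep : ∀ k, v k = r k + γ * v (k + 1))
    (hr : ∀ k, 0 ≤ r k) (hv0 : 0 < v 0) :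
    ∃ n, (∀ k < n, r k = 0) ∧ 0 < r n ∧ v 0 = γ ^ n * v n := by
  classical
  have hex : ∃ n, r n ≠ 0 := by
    by_contra! hzero
    exact hv0.not_ge <| nonpos_of_eq_pow_mul_of_bddAbove hγ0 hγ1 hv fun n =>
      eq_pow_mul_of_recurrence hstep n fun k _ => hzero k
  have hbefore : ∀ k < Nat.find hex, r k = 0 := fun k hk => not_not.mp (Nat.find_min hex hk)
  exact ⟨Nat.find hex, hbefore, (hr _).lt_of_ne' (Nat.find_spec hex),
    eq_pow_mul_of_recurrence hstep _ hbefore⟩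

end Recurrence

section Greedy

variable {S A : Type*} [Fintype A] [Nonempty A]

noncomputable def greedy (T : S → A → S) (V : S → ℝ) (s : S) : A :=
  (Finset.exists_mem_eq_sup' Finset.univ_nonempty fun a => V (T s a)).choose

theorem sup'_eq_greedy (T : S → A → S) (V : S → ℝ) (s : S) :
    Finset.univ.sup' Finset.univ_nonempty (fun a => V (T s a)) = V (T s (greedy T V s)) :=
  (Finset.exists_mem_eq_sup' Finset.univ_nonempty fun a => V (T s a)).choose_spec.2

end Greedy

theorem traj_feedback {S A : Type*} (T : S → A → S) (π : S → A) (s : S) (k : ℕ) :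
    traj T s (fun j => π ((fun x => T x (π x))^[j] s)) k = (fun x => T x (π x))^[k] s := by
  induction k with
  | zero => rfl
  | succ k ih => rw [traj, ih, Function.iterate_succ_apply']

theorem zero_reward_value_determined_by_positive_reward_state_general
    {S A : Type*} [Fintype S] [Fintype A] [Nonempty A]
    (T : S → A → S) (R : S → ℝ) (γ : ℝ) (hγ0 : 0 < γ) (hγ1 : γ < 1)
    (V : S → ℝ)
    (hV : ∀ s : S,
      V s = R s + γ * Finset.univ.sup' Finset.univ_nonempty (fun a : A => V (T s a)))
    (hR : ∀ s : S, 0 ≤ R s)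
    (s : S) (hRs : R s = 0) (hVs : 0 < V s) :
    ∃ n : ℕ, 1 ≤ n ∧ ∃ a : ℕ → A,
      (∀ k : ℕ, k < n → R (traj T s a k) = 0) ∧
      0 < R (traj T s a n) ∧
      V s = γ ^ n * V (traj T s a n) := by
  set π := greedy T V
  set path : ℕ → S := fun k => (fun x => T x (π x))^[k] s
  have hstep : ∀ k, V (path k) = R (path k) + γ * V (path (k + 1)) := fun k => by
    rw [hV (path k), sup'_eq_greedy,
      show path (k + 1) = _ from Function.iterate_succ_apply' _ k s]
  have hbdd : BddAbove (Set.range fun k => V (path k)) :=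
    (Set.finite_range V).bddAbove.mono (Set.range_comp_subset_range path V)
  obtain ⟨n, hzero, hpos, hval⟩ :=
    exists_first_pos_of_recurrence hγ0.le hγ1 hbdd hstep (fun k => hR _) hVs
  have hn : n ≠ 0 := by
    rintro rfl
    exact hpos.ne' hRs
  refine ⟨n, Nat.one_le_iff_ne_zero.mpr hn, fun j => π (path j), ?_⟩
  have htraj : ∀ k, traj T s (fun j => π (path j)) k = path k := traj_feedback T π s
  simp only [htraj]
  exact ⟨hzero, hpos, hval⟩

/-- In a deterministic MDP, the value of every zero-reward state is
determined by a positive-reward state: if `V` satisfies the deterministic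
Bellman optimality equation `V s = R s + γ * max_a V (T s a)`, rewards are
nonnegative, and `s` has `R s = 0` and `V s > 0`, then there is `n ≥ 1` and a
sequence of actions whose trajectory from `s` has zero reward at every step
before `n`, positive reward at step `n`, and `V s = γ ^ n * V (s⁽ⁿ⁾)`. -/
theorem zero_reward_value_determined_by_positive_reward_state
    {S A : Type*} [Fintype S] [Nonempty S] [Fintype A] [Nonempty A]
    (T : S → A → S) (R : S → ℝ) (γ : ℝ) (hγ0 : 0 < γ) (hγ1 : γ < 1)
    (V : S → ℝ)
    (hV : ∀ s : S,
      V s = R s + γ * Finset.univ.sup' Finset.univ_nonempty (fun a : A => V (T s a)))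
    (hR : ∀ s : S, 0 ≤ R s)
    (s : S) (hRs : R s = 0) (hVs : 0 < V s) :
    ∃ n : ℕ, 1 ≤ n ∧ ∃ a : ℕ → A,
      (∀ k : ℕ, k < n → R (traj T s a k) = 0) ∧
      0 < R (traj T s a n) ∧
      V s = γ ^ n * V (traj T s a n) :=
  zero_reward_value_determined_by_positive_reward_state_general T R γ hγ0 hγ1 V hV hR s hRs hVs
end

section
/- A fixed point of the deterministic Bellman optimality equation equals the supremum of discounted returns over all infinite action sequences: for a deterministic MDP, if V : S → ℝ satisfies V(s) = R(s) + γ · max_{a∈A} V(T(s,a)) for all s ∈ S, then for every s ∈ S, V(s) = sup over all infinite action sequences a : ℕ → A of ∑_{t=0}^∞ γᵗ R(s⁽ᵗ⁾), where s⁽⁰⁾ = s and s⁽ᵗ⁺¹⁾ = T(s⁽ᵗ⁾, a(t)). -/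
/-- A fixed point of the deterministic Bellman optimality equation equals the
supremum of discounted returns over all infinite action sequences: if
`V s = R s + γ * max_a V (T s a)` for all `s`, then
`V s = ⨆ (a : ℕ → A), ∑' t, γ ^ t * R (s⁽ᵗ⁾)`. -/
theorem bellman_fixed_point_eq_sup_of_returns
    {S A : Type*} [Fintype S] [Nonempty S] [Fintype A] [Nonempty A]
    (T : S → A → S) (R : S → ℝ) (γ : ℝ) (hγ0 : 0 < γ) (hγ1 : γ < 1)
    (V : S → ℝ)
    (hV : ∀ s : S,
      V s = R s + γ * Finset.univ.sup' Finset.univ_nonempty (fun a : A => V (T s a))) :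
    ∀ s : S, V s = ⨆ a : ℕ → A, ∑' t : ℕ, γ ^ t * R (traj T s a t) := by
  intro s
  have hγ0' : (0:ℝ) ≤ γ := hγ0.le
  obtain ⟨CV, hCV⟩ : ∃ C : ℝ, ∀ x : S, |V x| ≤ C :=
    ⟨Finset.univ.sup' Finset.univ_nonempty (fun x => |V x|),
     fun x => Finset.le_sup' (fun y => |V y|) (Finset.mem_univ x)⟩
  obtain ⟨CR, hCR⟩ : ∃ C : ℝ, ∀ x : S, |R x| ≤ C :=
    ⟨Finset.univ.sup' Finset.univ_nonempty (fun x => |R x|),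
     fun x => Finset.le_sup' (fun y => |R y|) (Finset.mem_univ x)⟩
  -- summability
  have hsum : ∀ a : ℕ → A, Summable fun t : ℕ => γ ^ t * R (traj T s a t) := by
    intro a
    apply Summable.of_norm_bounded (g := fun t : ℕ => γ ^ t * CR)
      ((summable_geometric_of_lt_one hγ0' hγ1).mul_right CR)
    intro t
    rw [norm_mul, norm_pow, Real.norm_eq_abs, abs_of_pos hγ0, Real.norm_eq_abs]
    exact mul_le_mul_of_nonneg_left (hCR _) (pow_nonneg hγ0' t)
  -- one-step Bellman inequality
  have hkey : ∀ (a : ℕ → A) (n : ℕ),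
      R (traj T s a n) + γ * V (traj T s a (n+1)) ≤ V (traj T s a n) := by
    intro a n
    rw [hV (traj T s a n)]
    have h1 : V (T (traj T s a n) (a n)) ≤
        Finset.univ.sup' Finset.univ_nonempty (fun b : A => V (T (traj T s a n) b)) :=
      Finset.le_sup' (fun b : A => V (T (traj T s a n) b)) (Finset.mem_univ (a n))
    have h2 : traj T s a (n+1) = T (traj T s a n) (a n) := rfl
    rw [h2]
    nlinarith [mul_le_mul_of_nonneg_left h1 hγ0']
  -- partial sum inequality
  have hstep : ∀ (a : ℕ → A) (n : ℕ),
      ∑ t ∈ Finset.range n, γ ^ t * R (traj T s a t) + γ ^ n * V (traj T s a n) ≤ V s := by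
    intro a n
    induction n with
    | zero => simp [traj]
    | succ n ih =>
      refine le_trans ?_ ih
      rw [Finset.sum_range_succ]
      have := mul_le_mul_of_nonneg_left (hkey a n) (pow_nonneg hγ0' n)
      ring_nf at this ⊢
      linarith
  -- limit of γ^n * V(s_n)
  have hlim0 : ∀ a : ℕ → A,
      Filter.Tendsto (fun n : ℕ => γ ^ n * V (traj T s a n)) Filter.atTop (nhds 0) := by
    intro a
    have hg : Filter.Tendsto (fun n : ℕ => γ ^ n * CV) Filter.atTop (nhds 0) := by
      have := (tendsto_pow_atTop_nhds_zero_of_lt_one hγ0' hγ1).mul_const CV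
      simpa using this
    refine squeeze_zero_norm (fun n => ?_) hg
    rw [norm_mul, norm_pow, Real.norm_eq_abs, abs_of_pos hγ0, Real.norm_eq_abs]
    exact mul_le_mul_of_nonneg_left (hCV _) (pow_nonneg hγ0' n)
  have hlimsum : ∀ a : ℕ → A,
      Filter.Tendsto (fun n : ℕ => ∑ t ∈ Finset.range n, γ ^ t * R (traj T s a t))
        Filter.atTop (nhds (∑' t : ℕ, γ ^ t * R (traj T s a t))) :=
    fun a => (hsum a).hasSum.tendsto_sum_nat
  -- tsum ≤ V s for every a
  have hle : ∀ a : ℕ → A, (∑' t : ℕ, γ ^ t * R (traj T s a t)) ≤ V s := by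
    intro a
    have h := (hlimsum a).add (hlim0 a)
    rw [add_zero] at h
    exact le_of_tendsto h (Filter.Eventually.of_forall (hstep a))
  -- greedy policy
  have hπ : ∀ x : S, ∃ b : A,
      Finset.univ.sup' Finset.univ_nonempty (fun c : A => V (T x c)) = V (T x b) := by
    intro x
    obtain ⟨b, _, hb⟩ := Finset.exists_mem_eq_sup' Finset.univ_nonempty (fun c : A => V (T x c))
    exact ⟨b, hb⟩
  choose π hπ using hπ
  let σ : ℕ → S := fun n => n.rec s (fun _ x => T x (π x))
  let astar : ℕ → A := fun n => π (σ n)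
  have htraj : ∀ n, traj T s astar n = σ n := by
    intro n
    induction n with
    | zero => rfl
    | succ n ih =>
      show T (traj T s astar n) (astar n) = T (σ n) (π (σ n))
      rw [ih]
  have heq : ∀ n : ℕ,
      ∑ t ∈ Finset.range n, γ ^ t * R (traj T s astar t) + γ ^ n * V (traj T s astar n) = V s := by
    intro n
    induction n with
    | zero => simp [traj]
    | succ n ih =>
      rw [← ih, Finset.sum_range_succ]
      have h1 : V (traj T s astar n) = R (traj T s astar n) + γ * V (traj T s astar (n+1)) := by
        rw [hV (traj T s astar n)]
        have h2 : traj T s astar (n+1) = T (traj T s astar n) (astar n) := rfl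
        rw [h2, htraj n, hπ (σ n)]
      rw [h1]; ring
  have heq' : V s = ∑' t : ℕ, γ ^ t * R (traj T s astar t) := by
    have h := (hlimsum astar).add (hlim0 astar)
    rw [add_zero] at h
    have hc : Filter.Tendsto (fun _ : ℕ => V s) Filter.atTop (nhds (V s)) := tendsto_const_nhds
    refine tendsto_nhds_unique ?_ h
    exact hc.congr (fun n => (heq n).symm)
  refine le_antisymm ?_ (ciSup_le hle)
  rw [heq']
  exact le_ciSup ⟨V s, Set.forall_mem_range.2 hle⟩ astar
end

section
/- Combined peak value function for two adjacent rewards in the grid world: let p, q ∈ ℤ × ℤ with Manhattan distance d(p,q) = 1, let r_p ≥ r_s > 0 be real rewards placed at p and q respectively, and let 0 < γ < 1. Define R(x) = r_p if x = p, R(x) = r_s if x = q, and R(x) = 0 otherwise, and define V(x) = γ^{d(x,p)} · r_p/(1 − γ²) + γ^{d(x,q)} · r_s/(1 − γ²). Then V satisfies the Bellman optimality equation of the grid world: for every x ∈ ℤ × ℤ, V(x) = R(x) + γ · max over m ∈ {(1,0), (−1,0), (0,1), (0,−1)} of V(x + m). -/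
/-!
Write `a = r_p / (1 - γ²)` and `b = r_s / (1 - γ²)`, so that
`V x = a γ^{d(x,p)} + b γ^{d(x,q)}`. A unit move changes each distance by at most one, so for
`0 ≤ γ ≤ 1` and `a, b ≥ 0` the maximum of `V` over the neighbours of `x` is attained by a move
bringing `x` one step closer to both peaks, when there is one. Off `{p, q}` such a move exists,
and the Bellman equation reduces to `γ^{k+1} = γ · γ^k`. From `p` (resp. `q`) the best move is
onto the other peak, and the equation becomes `a (1 - γ²) = r_p` (resp. `b (1 - γ²) = r_s`).
-/

def manhattanDist (p q : ℤ × ℤ) : ℕ :=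
  (p.1 - q.1).natAbs + (p.2 - q.2).natAbs

def gridMoves : Finset (ℤ × ℤ) :=
  {(1, 0), (-1, 0), (0, 1), (0, -1)}

theorem gridMoves_nonempty : gridMoves.Nonempty := ⟨(1, 0), by decide⟩

theorem Finset.sup'_pow_mul_add_pow_mul_eq {ι : Type*} {s : Finset ι} (hs : s.Nonempty)
    {γ a b : ℝ} (hγ0 : 0 ≤ γ) (hγ1 : γ ≤ 1) (ha : 0 ≤ a) (hb : 0 ≤ b)
    {u v : ι → ℕ} {U V : ℕ} (hu : ∀ m ∈ s, U ≤ u m) (hv : ∀ m ∈ s, V ≤ v m)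
    {m₀ : ι} (hm₀ : m₀ ∈ s) (hu₀ : u m₀ = U) (hv₀ : v m₀ = V) :
    s.sup' hs (fun m => γ ^ u m * a + γ ^ v m * b) = γ ^ U * a + γ ^ V * b := by
  refine le_antisymm (Finset.sup'_le _ _ fun m hm => ?_) (Finset.le_sup'_of_le _ hm₀ ?_)
  · exact add_le_add (mul_le_mul_of_nonneg_right (pow_le_pow_of_le_one hγ0 hγ1 (hu m hm)) ha)
      (mul_le_mul_of_nonneg_right (pow_le_pow_of_le_one hγ0 hγ1 (hv m hm)) hb)
  · rw [hu₀, hv₀]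

theorem manhattanDist_comm (x y : ℤ × ℤ) : manhattanDist x y = manhattanDist y x := by
  simp only [manhattanDist]; omega

@[simp]
theorem manhattanDist_self (x : ℤ × ℤ) : manhattanDist x x = 0 := by
  simp [manhattanDist]

theorem mem_gridMoves {m : ℤ × ℤ} :
    m ∈ gridMoves ↔ m = (1, 0) ∨ m = (-1, 0) ∨ m = (0, 1) ∨ m = (0, -1) := by
  simp [gridMoves]

theorem manhattanDist_le_manhattanDist_add_gridMove {m : ℤ × ℤ} (hm : m ∈ gridMoves)
    (x y : ℤ × ℤ) : manhattanDist x y ≤ manhattanDist (x + m) y + 1 := by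
  rcases mem_gridMoves.mp hm with rfl | rfl | rfl | rfl <;>
    simp only [manhattanDist, Prod.fst_add, Prod.snd_add] <;> omega

theorem manhattanDist_add_gridMove_self {m : ℤ × ℤ} (hm : m ∈ gridMoves) (x : ℤ × ℤ) :
    manhattanDist (x + m) x = 1 := by
  rcases mem_gridMoves.mp hm with rfl | rfl | rfl | rfl <;>
    simp only [manhattanDist, Prod.fst_add, Prod.snd_add] <;> omega

theorem sub_mem_gridMoves {p q : ℤ × ℤ} (h : manhattanDist p q = 1) : q - p ∈ gridMoves := by
  simp only [manhattanDist] at h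
  simp only [mem_gridMoves, Prod.ext_iff, Prod.fst_sub, Prod.snd_sub]
  omega

theorem exists_gridMove_closer_to_both {p q x : ℤ × ℤ} (hpq : manhattanDist p q = 1)
    (hxp : x ≠ p) (hxq : x ≠ q) :
    ∃ m ∈ gridMoves, manhattanDist (x + m) p + 1 = manhattanDist x p ∧
      manhattanDist (x + m) q + 1 = manhattanDist x q := by
  simp only [ne_eq, Prod.ext_iff, not_and_or] at hxp hxq
  simp only [gridMoves, Finset.mem_insert, Finset.mem_singleton, exists_eq_or_imp,
    exists_eq_left, manhattanDist, Prod.fst_add, Prod.snd_add] at hpq ⊢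
  omega

/-- Combined peak value function for two adjacent rewards in the grid world:
with rewards `r_p ≥ r_s > 0` placed at adjacent cells `p` and `q` and
`0 < γ < 1`, the function
`V x = γ^{d(x,p)} · r_p/(1−γ²) + γ^{d(x,q)} · r_s/(1−γ²)` satisfies the
Bellman optimality equation `V x = R x + γ * max_{m} V (x + m)` of the grid
world, where `R` is `r_p` at `p`, `r_s` at `q` and `0` elsewhere. -/
theorem combined_peak_value_function
    (p q : ℤ × ℤ) (hpq : manhattanDist p q = 1)
    (r_p r_s γ : ℝ) (hr : r_s ≤ r_p) (hrs : 0 < r_s) (hγ0 : 0 < γ) (hγ1 : γ < 1) :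
    ∀ x : ℤ × ℤ,
      γ ^ manhattanDist x p * (r_p / (1 - γ ^ 2))
          + γ ^ manhattanDist x q * (r_s / (1 - γ ^ 2))
        = (if x = p then r_p else if x = q then r_s else 0)
            + γ * gridMoves.sup' gridMoves_nonempty
                (fun m => γ ^ manhattanDist (x + m) p * (r_p / (1 - γ ^ 2))
                  + γ ^ manhattanDist (x + m) q * (r_s / (1 - γ ^ 2))) := by
  intro x
  have hγ2 : 0 < 1 - γ ^ 2 := by nlinarith
  have hsup := fun U V => Finset.sup'_pow_mul_add_pow_mul_eq gridMoves_nonempty hγ0.le hγ1.le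
    (div_nonneg (hrs.le.trans hr) hγ2.le) (div_nonneg hrs.le hγ2.le)
    (u := fun m => manhattanDist (x + m) p) (v := fun m => manhattanDist (x + m) q)
    (U := U) (V := V)
  have hqp : manhattanDist q p = 1 := manhattanDist_comm q p ▸ hpq
  rcases eq_or_ne x p with rfl | hxp
  · rw [hsup 1 0 (fun m hm => (manhattanDist_add_gridMove_self hm x).ge) (fun _ _ => Nat.zero_le _)
      (sub_mem_gridMoves hpq) (by simp [hqp]) (by simp)]
    simp only [manhattanDist_self, hpq, if_true]
    field_simp
    ring
  rcases eq_or_ne x q with rfl | hxq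
  · rw [hsup 0 1 (fun _ _ => Nat.zero_le _) (fun m hm => (manhattanDist_add_gridMove_self hm x).ge)
      (sub_mem_gridMoves hqp) (by simp) (by simp [hpq])]
    simp only [manhattanDist_self, hqp, if_neg hxp, if_true]
    field_simp
    ring
  obtain ⟨m₀, hm₀, hp₀, hq₀⟩ := exists_gridMove_closer_to_both hpq hxp hxq
  rw [hsup _ _ (fun m hm => by have := manhattanDist_le_manhattanDist_add_gridMove hm x p; omega)
    (fun m hm => by have := manhattanDist_le_manhattanDist_add_gridMove hm x q; omega)
    hm₀ rfl rfl, ← hp₀, ← hq₀, if_neg hxp, if_neg hxq]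
  ring
end
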